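/- Uniqueness of normal forms for unit-free trees: if x and x̃ are unit-free compatible trees over a computad C, both in normal form, and x ≗° x̃, then x = x̃. -/
import Mathlib


namespace Sesq

/-- `(𝒪ₙ, X)`-labelled trees: leaves labelled by cells of `X`, internal vertices
labelled by unit generators `u_i` or composition/whiskering generators `∘_{i,j}`. -/
inductive PTree (X : Type) : Type
  | leaf : X → PTree X
  | unit : ℕ → PTree X → PTree X
  | comp : ℕ → ℕ → PTree X → PTree X → PTree X

namespace PTree

variable {X Y : Type}

/-- Dimension of a labelled tree. -/
def dimT (dX : X → ℕ) : PTree X → ℕ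
  | leaf c => dX c
  | unit i _ => i
  | comp i j _ _ => max i j

/-- Well-formedness: labels have the appropriate dimensions. -/
def WF (dX : X → ℕ) : PTree X → Prop
  | leaf _ => True
  | unit i x => WF dX x ∧ dimT dX x + 1 = i
  | comp i j x y => WF dX x ∧ WF dX y ∧ dimT dX x = i ∧ dimT dX y = j ∧ 1 ≤ i ∧ 1 ≤ j

/-- Relabelling the leaves of a tree. -/
def mapTree (f : X → Y) : PTree X → PTree Y
  | leaf c => leaf (f c)
  | unit i x => unit i (mapTree f x)
  | comp i j x y => comp i j (mapTree f x) (mapTree f y)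

/-- A tree contains no `u`-labelled vertices. -/
def UnitFree : PTree X → Prop
  | leaf _ => True
  | unit _ _ => False
  | comp _ _ x y => UnitFree x ∧ UnitFree y

/-- The ordered list of leaves of a tree (increasing for the canonical linear order:
every leaf of the left subtree of `∘_{i,j}` is greater than every leaf of the right one). -/
def leaves : PTree X → List X
  | leaf c => [c]
  | unit _ x => leaves x
  | comp _ _ x y => leaves y ++ leaves x

/-- The cell dimension `cd(x)`: the maximum of the dimensions of the cells labelling leaves. -/
def cdim (dX : X → ℕ) (x : PTree X) : ℕ :=
  ((leaves x).map dX).foldr max 0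

/-- The leaves of dimension at least `M`, in the canonical order. -/
def leavesGe (dX : X → ℕ) (M : ℕ) (x : PTree X) : List X :=
  (leaves x).filter fun c => M ≤ dX c

/-- `M(x) = max { j : x has at least two leaves of dimension ≥ j }`, with `M(x) = ⊥ = -∞`
if `x` has only one leaf. -/
def Mval (dX : X → ℕ) (x : PTree X) : WithBot ℕ :=
  (((List.range (cdim dX x + 1)).filter
      fun j => 2 ≤ ((leaves x).filter fun c => j ≤ dX c).length).map
      (fun j => (j : WithBot ℕ))).foldr max ⊥

/-- The set of values `m(v) = min i j` over `∘_{i,j}`-labelled internal vertices. -/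
def mset : PTree X → Finset ℕ
  | leaf _ => ∅
  | unit _ x => mset x
  | comp i j x y => insert (min i j) (mset x ∪ mset y)

/-- `H(x)`, the number of distinct values of `m(v)` over internal `∘`-vertices of `x`. -/
def Hval (x : PTree X) : ℕ := (mset x).card

/-- The reduction `r(x)`, deleting unit-generated subtrees; `none` plays the role of `∅`. -/
def reduce : PTree X → Option (PTree X)
  | leaf c => some (leaf c)
  | unit _ _ => none
  | comp i j x y =>
    if i = j then
      match reduce x, reduce y with
      | none, r => r
      | r, none => r
      | some a, some b => some (comp i j a b)
    else if i < j then
      match reduce x, reduce y with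
      | none, r => r
      | _, none => none
      | some a, some b => some (comp i j a b)
    else
      match reduce x, reduce y with
      | r, none => r
      | none, _ => none
      | some a, some b => some (comp i j a b)

/-- The slice `σ^M_ℓ(w)`, where the leaf `ℓ ∈ L_{≥M}(w)` is specified by its index
`idx` in the ordered list `leavesGe dX M w`. -/
def slice (dX : X → ℕ) (M : ℕ) : PTree X → ℕ → PTree X
  | leaf c, _ => leaf c
  | unit i x, _ => unit i x
  | comp i j x y, idx =>
    if M ≤ min i j then
      if idx < (leavesGe dX M y).length then slice dX M y idx
      else slice dX M x (idx - (leavesGe dX M y).length)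
    else if i < j then
      comp i (dimT dX (slice dX M y idx)) x (slice dX M y idx)
    else
      comp (dimT dX (slice dX M x idx)) j (slice dX M x idx) y

/-- Grafting the chain of units `u_{a+1} → ⋯ → u_b` on top of `t`. -/
def graftUnits (t : PTree X) (a : ℕ) : ℕ → PTree X
  | 0 => t
  | b + 1 => if a < b + 1 then unit (b + 1) (graftUnits t a b) else t

/-- The root of `t` is not a unit vertex. -/
def notUnitRoot (t : PTree X) : Prop := ∀ i y, t ≠ unit i y

/-- If the root of `t` is a `∘`-vertex, then its `m`-value is `< m`. -/
def smallRoot (m : ℕ) (t : PTree X) : Prop :=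
  ∀ a b u v, t = comp a b u v → min a b < m

/-- The labelled-subtree relation: `IsSubtree s t` iff `s` is the full subtree of `t`
above some vertex. -/
inductive IsSubtree : PTree X → PTree X → Prop
  | refl (t) : IsSubtree t t
  | unit (i x s) : IsSubtree s x → IsSubtree s (PTree.unit i x)
  | left (i j x y s) : IsSubtree s x → IsSubtree s (PTree.comp i j x y)
  | right (i j x y s) : IsSubtree s y → IsSubtree s (PTree.comp i j x y)

end PTree

/-- A precomputad: a set of cells with dimensions and source/target trees. -/
structure Precomputad where
  cells : Type
  dim : cells → ℕ
  csrc : cells → PTree cells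
  ctgt : cells → PTree cells

namespace Precomputad

variable (P : Precomputad)

/-- The source map on labelled trees. -/
def srcT : PTree P.cells → PTree P.cells
  | .leaf c => P.csrc c
  | .unit _ x => x
  | .comp i j x y =>
    if i = j then srcT y
    else if i < j then .comp i (j - 1) x (srcT y)
    else .comp (i - 1) j (srcT x) y

/-- The target map on labelled trees. -/
def tgtT : PTree P.cells → PTree P.cells
  | .leaf c => P.ctgt c
  | .unit _ x => x
  | .comp i j x y =>
    if i = j then tgtT y
    else if i < j then .comp i (j - 1) x (tgtT y)
    else .comp (i - 1) j (tgtT x) y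

/-- Iterated source. -/
def srcIter (k : ℕ) : PTree P.cells → PTree P.cells := P.srcT^[k]

/-- Iterated target. -/
def tgtIter (k : ℕ) : PTree P.cells → PTree P.cells := P.tgtT^[k]

end Precomputad

open PTree

mutual

/-- `≗`-compatibility of labelled trees. -/
inductive Compat (P : Precomputad) : PTree P.cells → Prop
  | leaf (c) : Compat P (.leaf c)
  | unit {i : ℕ} {x} : Compat P x → dimT P.dim x + 1 = i → Compat P (.unit i x)
  | comp {i j : ℕ} {x y} : Compat P x → Compat P y →
      dimT P.dim x = i → dimT P.dim y = j → 1 ≤ min i j →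
      Rel P (P.srcIter (i - min i j + 1) x) (P.tgtIter (j - min i j + 1) y) →
      Compat P (.comp i j x y)

/-- The equivalence relation `≗` on compatible trees, generated by the relations `ℰₙ`
(units, associativity and congruence). -/
inductive Rel (P : Precomputad) : PTree P.cells → PTree P.cells → Prop
  | refl {x} : Compat P x → Rel P x x
  | symm {x y} : Rel P x y → Rel P y x
  | trans {x y z} : Rel P x y → Rel P y z → Rel P x z
  | congr_unit {k x x'} : Rel P x x' → Rel P (.unit k x) (.unit k x')
  | congr_comp {i j x x' y y'} : Rel P x x' → Rel P y y' →
      Compat P (.comp i j x y) → Compat P (.comp i j x' y') →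
      Rel P (.comp i j x y) (.comp i j x' y')
  | lam_unit {i k x y} : i ≤ k → Compat P x → Compat P y →
      dimT P.dim x + 1 = i → dimT P.dim y = k →
      Rel P x (P.tgtIter (k - i + 1) y) →
      Rel P (.comp i k (.unit i x) y) y
  | rho_unit {k i x y} : i ≤ k → Compat P x → Compat P y →
      dimT P.dim x = k → dimT P.dim y + 1 = i →
      Rel P (P.srcIter (k - i + 1) x) y →
      Rel P (.comp k i x (.unit i y)) x
  | rho_push {i k x y} : i < k → Compat P x → Compat P y →
      dimT P.dim x = i → dimT P.dim y + 1 = k →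
      Rel P (P.srcT x) (P.tgtIter (k - i) y) →
      Rel P (.comp i k x (.unit k y)) (.unit k (.comp i (k - 1) x y))
  | lam_push {k i x y} : i < k → Compat P x → Compat P y →
      dimT P.dim x + 1 = k → dimT P.dim y = i →
      Rel P (P.srcIter (k - i) x) (P.tgtT y) →
      Rel P (.comp k i (.unit k x) y) (.unit k (.comp (k - 1) i x y))
  | assoc_kkk {k x y z} : Compat P x → Compat P y → Compat P z →
      dimT P.dim x = k → dimT P.dim y = k → dimT P.dim z = k →
      Rel P (P.srcT x) (P.tgtT y) → Rel P (P.srcT y) (P.tgtT z) →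
      Rel P (.comp k k (.comp k k x y) z) (.comp k k x (.comp k k y z))
  | assoc_iik {i k x y z} : i < k → Compat P x → Compat P y → Compat P z →
      dimT P.dim x = i → dimT P.dim y = i → dimT P.dim z = k →
      Rel P (P.srcT x) (P.tgtT y) → Rel P (P.srcT y) (P.tgtIter (k - i + 1) z) →
      Rel P (.comp i k (.comp i i x y) z) (.comp i k x (.comp i k y z))
  | assoc_iki {i k x y z} : i < k → Compat P x → Compat P y → Compat P z →
      dimT P.dim x = i → dimT P.dim y = k → dimT P.dim z = i →
      Rel P (P.srcT x) (P.tgtIter (k - i + 1) y) → Rel P (P.srcIter (k - i + 1) y) (P.tgtT z) →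
      Rel P (.comp k i (.comp i k x y) z) (.comp i k x (.comp k i y z))
  | assoc_kii {i k x y z} : i < k → Compat P x → Compat P y → Compat P z →
      dimT P.dim x = k → dimT P.dim y = i → dimT P.dim z = i →
      Rel P (P.srcIter (k - i + 1) x) (P.tgtT y) → Rel P (P.srcT y) (P.tgtT z) →
      Rel P (.comp k i (.comp k i x y) z) (.comp k i x (.comp i i y z))
  | assoc_ikk {i k x y z} : i < k → Compat P x → Compat P y → Compat P z →
      dimT P.dim x = i → dimT P.dim y = k → dimT P.dim z = k →
      Rel P (P.srcT x) (P.tgtIter (k - i + 1) y) → Rel P (P.srcT y) (P.tgtT z) →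
      Rel P (.comp i k x (.comp k k y z)) (.comp k k (.comp i k x y) (.comp i k x z))
  | assoc_kki {i k x y z} : i < k → Compat P x → Compat P y → Compat P z →
      dimT P.dim x = k → dimT P.dim y = k → dimT P.dim z = i →
      Rel P (P.srcT x) (P.tgtT y) → Rel P (P.srcIter (k - i + 1) y) (P.tgtT z) →
      Rel P (.comp k i (.comp k k x y) z) (.comp k k (.comp k i x z) (.comp k i y z))
  | assoc_ijk {i j k x y z} : i < j → j < k → Compat P x → Compat P y → Compat P z →
      dimT P.dim x = i → dimT P.dim y = j → dimT P.dim z = k →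
      Rel P (P.srcT x) (P.tgtIter (j - i + 1) y) → Rel P (P.srcT y) (P.tgtIter (k - j + 1) z) →
      Rel P (.comp i k x (.comp j k y z)) (.comp j k (.comp i j x y) (.comp i k x z))
  | assoc_ikj {i j k x y z} : i < j → j < k → Compat P x → Compat P y → Compat P z →
      dimT P.dim x = i → dimT P.dim y = k → dimT P.dim z = j →
      Rel P (P.srcT x) (P.tgtIter (k - i + 1) y) → Rel P (P.srcIter (k - j + 1) y) (P.tgtT z) →
      Rel P (.comp i k x (.comp k j y z)) (.comp k j (.comp i k x y) (.comp i j x z))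
  | assoc_jki {i j k x y z} : i < j → j < k → Compat P x → Compat P y → Compat P z →
      dimT P.dim x = j → dimT P.dim y = k → dimT P.dim z = i →
      Rel P (P.srcT x) (P.tgtIter (k - j + 1) y) → Rel P (P.srcIter (k - i + 1) y) (P.tgtT z) →
      Rel P (.comp k i (.comp j k x y) z) (.comp j k (.comp j i x z) (.comp k i y z))
  | assoc_kji {i j k x y z} : i < j → j < k → Compat P x → Compat P y → Compat P z →
      dimT P.dim x = k → dimT P.dim y = j → dimT P.dim z = i →
      Rel P (P.srcIter (k - j + 1) x) (P.tgtT y) → Rel P (P.srcIter (j - i + 1) y) (P.tgtT z) →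
      Rel P (.comp k i (.comp k j x y) z) (.comp k j (.comp k i x z) (.comp j i y z))

end

mutual

/-- `≗°`-compatibility: compatibility with respect to the unit-free relations only. -/
inductive CompatO (P : Precomputad) : PTree P.cells → Prop
  | leaf (c) : CompatO P (.leaf c)
  | unit {i : ℕ} {x} : CompatO P x → dimT P.dim x + 1 = i → CompatO P (.unit i x)
  | comp {i j : ℕ} {x y} : CompatO P x → CompatO P y →
      dimT P.dim x = i → dimT P.dim y = j → 1 ≤ min i j →
      RelO P (P.srcIter (i - min i j + 1) x) (P.tgtIter (j - min i j + 1) y) →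
      CompatO P (.comp i j x y)

/-- The unit-free equivalence `≗°`, generated by the relations of `ℰₙ` not involving units. -/
inductive RelO (P : Precomputad) : PTree P.cells → PTree P.cells → Prop
  | refl {x} : CompatO P x → RelO P x x
  | symm {x y} : RelO P x y → RelO P y x
  | trans {x y z} : RelO P x y → RelO P y z → RelO P x z
  | congr_comp {i j x x' y y'} : RelO P x x' → RelO P y y' →
      CompatO P (.comp i j x y) → CompatO P (.comp i j x' y') →
      RelO P (.comp i j x y) (.comp i j x' y')
  | assoc_kkk {k x y z} : CompatO P x → CompatO P y → CompatO P z →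
      dimT P.dim x = k → dimT P.dim y = k → dimT P.dim z = k →
      RelO P (P.srcT x) (P.tgtT y) → RelO P (P.srcT y) (P.tgtT z) →
      RelO P (.comp k k (.comp k k x y) z) (.comp k k x (.comp k k y z))
  | assoc_iik {i k x y z} : i < k → CompatO P x → CompatO P y → CompatO P z →
      dimT P.dim x = i → dimT P.dim y = i → dimT P.dim z = k →
      RelO P (P.srcT x) (P.tgtT y) → RelO P (P.srcT y) (P.tgtIter (k - i + 1) z) →
      RelO P (.comp i k (.comp i i x y) z) (.comp i k x (.comp i k y z))
  | assoc_iki {i k x y z} : i < k → CompatO P x → CompatO P y → CompatO P z →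
      dimT P.dim x = i → dimT P.dim y = k → dimT P.dim z = i →
      RelO P (P.srcT x) (P.tgtIter (k - i + 1) y) → RelO P (P.srcIter (k - i + 1) y) (P.tgtT z) →
      RelO P (.comp k i (.comp i k x y) z) (.comp i k x (.comp k i y z))
  | assoc_kii {i k x y z} : i < k → CompatO P x → CompatO P y → CompatO P z →
      dimT P.dim x = k → dimT P.dim y = i → dimT P.dim z = i →
      RelO P (P.srcIter (k - i + 1) x) (P.tgtT y) → RelO P (P.srcT y) (P.tgtT z) →
      RelO P (.comp k i (.comp k i x y) z) (.comp k i x (.comp i i y z))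
  | assoc_ikk {i k x y z} : i < k → CompatO P x → CompatO P y → CompatO P z →
      dimT P.dim x = i → dimT P.dim y = k → dimT P.dim z = k →
      RelO P (P.srcT x) (P.tgtIter (k - i + 1) y) → RelO P (P.srcT y) (P.tgtT z) →
      RelO P (.comp i k x (.comp k k y z)) (.comp k k (.comp i k x y) (.comp i k x z))
  | assoc_kki {i k x y z} : i < k → CompatO P x → CompatO P y → CompatO P z →
      dimT P.dim x = k → dimT P.dim y = k → dimT P.dim z = i →
      RelO P (P.srcT x) (P.tgtT y) → RelO P (P.srcIter (k - i + 1) y) (P.tgtT z) →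
      RelO P (.comp k i (.comp k k x y) z) (.comp k k (.comp k i x z) (.comp k i y z))
  | assoc_ijk {i j k x y z} : i < j → j < k → CompatO P x → CompatO P y → CompatO P z →
      dimT P.dim x = i → dimT P.dim y = j → dimT P.dim z = k →
      RelO P (P.srcT x) (P.tgtIter (j - i + 1) y) → RelO P (P.srcT y) (P.tgtIter (k - j + 1) z) →
      RelO P (.comp i k x (.comp j k y z)) (.comp j k (.comp i j x y) (.comp i k x z))
  | assoc_ikj {i j k x y z} : i < j → j < k → CompatO P x → CompatO P y → CompatO P z →
      dimT P.dim x = i → dimT P.dim y = k → dimT P.dim z = j →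
      RelO P (P.srcT x) (P.tgtIter (k - i + 1) y) → RelO P (P.srcIter (k - j + 1) y) (P.tgtT z) →
      RelO P (.comp i k x (.comp k j y z)) (.comp k j (.comp i k x y) (.comp i j x z))
  | assoc_jki {i j k x y z} : i < j → j < k → CompatO P x → CompatO P y → CompatO P z →
      dimT P.dim x = j → dimT P.dim y = k → dimT P.dim z = i →
      RelO P (P.srcT x) (P.tgtIter (k - j + 1) y) → RelO P (P.srcIter (k - i + 1) y) (P.tgtT z) →
      RelO P (.comp k i (.comp j k x y) z) (.comp j k (.comp j i x z) (.comp k i y z))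
  | assoc_kji {i j k x y z} : i < j → j < k → CompatO P x → CompatO P y → CompatO P z →
      dimT P.dim x = k → dimT P.dim y = j → dimT P.dim z = i →
      RelO P (P.srcIter (k - j + 1) x) (P.tgtT y) → RelO P (P.srcIter (j - i + 1) y) (P.tgtT z) →
      RelO P (.comp k i (.comp k j x y) z) (.comp k j (.comp k i x z) (.comp j i y z))

end

mutual

/-- Trees in normal form: `m`-ordered, no edge `u → ∘`, and every `m`-constant
component in one of the two prescribed chain shapes. -/
inductive NF {X : Type} : PTree X → Prop
  | leaf (c : X) : NF (.leaf c)
  | unit (i : ℕ) (x : PTree X) : NF x → NF (.unit i x)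
  | compEq (k : ℕ) (x y : PTree X) : NF x → notUnitRoot x → smallRoot k x →
      ChainKK k y → NF (.comp k k x y)
  | compLt (i k : ℕ) (x y : PTree X) : i < k → NF x → notUnitRoot x → smallRoot i x →
      ChainA i k y → NF (.comp i k x y)
  | compGt (i k : ℕ) (x y : PTree X) : i < k → ChainB i k x → NF y → notUnitRoot y →
      smallRoot i y → NF (.comp k i x y)

/-- Continuation of an `m`-constant `∘_{k,k}`-chain in normal form. -/
inductive ChainKK {X : Type} : ℕ → PTree X → Prop
  | cons (k : ℕ) (x y : PTree X) : NF x → notUnitRoot x → smallRoot k x →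
      ChainKK k y → ChainKK k (.comp k k x y)
  | base (k : ℕ) (t : PTree X) : NF t → notUnitRoot t → smallRoot k t → ChainKK k t

/-- Continuation of the `∘_{i,k}`-phase of a mixed `m`-constant chain in normal form. -/
inductive ChainA {X : Type} : ℕ → ℕ → PTree X → Prop
  | cons (i k : ℕ) (x y : PTree X) : NF x → notUnitRoot x → smallRoot i x →
      ChainA i k y → ChainA i k (.comp i k x y)
  | toB (i k : ℕ) (t : PTree X) : ChainB i k t → ChainA i k t

/-- Continuation of the `∘_{k,i}`-phase of a mixed `m`-constant chain in normal form. -/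
inductive ChainB {X : Type} : ℕ → ℕ → PTree X → Prop
  | cons (i k : ℕ) (x y : PTree X) : ChainB i k x → NF y → notUnitRoot y →
      smallRoot i y → ChainB i k (.comp k i x y)
  | base (i k : ℕ) (t : PTree X) : NF t → notUnitRoot t → smallRoot i t → ChainB i k t

end

/-- A computad for the `n`-sesquicategory monad: cells of dimension `≤ n+1` with
compatible source/target trees satisfying the globularity relations up to `≗`. -/
structure Computad (n : ℕ) extends Precomputad where
  dim_le : ∀ c, dim c ≤ n + 1
  src_wf : ∀ c, 1 ≤ dim c → WF dim (csrc c)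
  tgt_wf : ∀ c, 1 ≤ dim c → WF dim (ctgt c)
  src_dim : ∀ c, 1 ≤ dim c → dimT dim (csrc c) + 1 = dim c
  tgt_dim : ∀ c, 1 ≤ dim c → dimT dim (ctgt c) + 1 = dim c
  src_compat : ∀ c, 1 ≤ dim c → Compat toPrecomputad (csrc c)
  tgt_compat : ∀ c, 1 ≤ dim c → Compat toPrecomputad (ctgt c)
  glob_s : ∀ c, 2 ≤ dim c →
    Rel toPrecomputad (toPrecomputad.srcT (csrc c)) (toPrecomputad.srcT (ctgt c))
  glob_t : ∀ c, 2 ≤ dim c →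
    Rel toPrecomputad (toPrecomputad.tgtT (csrc c)) (toPrecomputad.tgtT (ctgt c))

/-- A map of computads: a dimension-preserving map of cells commuting with
source and target up to `≗`. -/
structure CompHom {n : ℕ} (C D : Computad n) where
  f : C.cells → D.cells
  dim_eq : ∀ c, D.dim (f c) = C.dim c
  src_ok : ∀ c, 1 ≤ C.dim c →
    Rel D.toPrecomputad (D.csrc (f c)) (mapTree f (C.csrc c))
  tgt_ok : ∀ c, 1 ≤ C.dim c →
    Rel D.toPrecomputad (D.ctgt (f c)) (mapTree f (C.ctgt c))

end Sesq

namespace Sesq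

namespace NFU

open PTree

variable {X : Type}

/-- Decompose the top `∘_{i,i}`-chain of a tree into its list of summands. -/
def chainD (i : ℕ) : PTree X → List (PTree X)
  | .comp p q a r => if p = i ∧ q = i then a :: chainD i r else [.comp p q a r]
  | t => [t]

/-- Graft an atom `a` onto a normal form `y` from the left via `∘_{i,k}`. -/
def gluewL (i k : ℕ) (a : PTree X) : PTree X → PTree X
  | .comp p q y1 y2 =>
      if min p q ≤ i then .comp i k a (.comp p q y1 y2)
      else .comp p q (gluewL i p a y1) (gluewL i q a y2)
  | t => .comp i k a t

/-- Graft an atom `a` onto a normal form `x` from the right via `∘_{k,i}`. -/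
def gluewR (k i : ℕ) : PTree X → PTree X → PTree X
  | .comp p q x1 x2, a =>
      if i < min p q then .comp p q (gluewR p i x1 a) (gluewR q i x2 a)
      else if p = i ∧ i < q then .comp p q x1 (gluewR q i x2 a)
      else .comp k i (.comp p q x1 x2) a
  | t, a => .comp k i t a

/-- Merge two normal forms along `∘_{i,j}`. -/
def glue (i j : ℕ) (x y : PTree X) : PTree X :=
  if i = j then (chainD i x).foldr (fun a r => .comp i i a r) y
  else if i < j then (chainD i x).foldr (fun a r => gluewL i j a r) y
  else (chainD j y).foldl (fun r a => gluewR i j r a) x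

/-- The normalization function. -/
def nf : PTree X → PTree X
  | .leaf c => .leaf c
  | .unit i x => .unit i (nf x)
  | .comp i j x y => glue i j (nf x) (nf y)

/-- The root is not a `∘_{i,i}`-vertex. -/
def NotII (i : ℕ) : PTree X → Prop
  | .comp p q _ _ => ¬(p = i ∧ q = i)
  | _ => True

/-- The root `m`-value is at most `m` (or the root is not a `∘`-vertex). -/
def LowRoot (m : ℕ) : PTree X → Prop
  | .comp p q _ _ => min p q ≤ m
  | _ => True

@[simp] lemma NotII_comp {m p q : ℕ} {a b : PTree X} :
    NotII m (.comp p q a b) ↔ ¬(p = m ∧ q = m) := Iff.rfl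
@[simp] lemma NotII_leaf {m : ℕ} {c : X} : NotII m (.leaf c) := trivial
@[simp] lemma NotII_unit {m n : ℕ} {t : PTree X} : NotII m (.unit n t) := trivial
@[simp] lemma LowRoot_comp {m p q : ℕ} {a b : PTree X} :
    LowRoot m (.comp p q a b) ↔ min p q ≤ m := Iff.rfl
@[simp] lemma LowRoot_leaf {m : ℕ} {c : X} : LowRoot m (.leaf c) := trivial
@[simp] lemma LowRoot_unit {m n : ℕ} {t : PTree X} : LowRoot m (.unit n t) := trivial

@[simp] lemma gluewL_leaf (i k : ℕ) (a : PTree X) (c : X) :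
    gluewL i k a (.leaf c) = .comp i k a (.leaf c) := rfl
@[simp] lemma gluewL_unit (i k n : ℕ) (a t : PTree X) :
    gluewL i k a (.unit n t) = .comp i k a (.unit n t) := rfl
lemma gluewL_comp (i k p q : ℕ) (a y1 y2 : PTree X) :
    gluewL i k a (.comp p q y1 y2) =
      if min p q ≤ i then .comp i k a (.comp p q y1 y2)
      else .comp p q (gluewL i p a y1) (gluewL i q a y2) := rfl

lemma gluewL_dist {i p q : ℕ} (h : ¬ min p q ≤ i) (k : ℕ) (a y1 y2 : PTree X) :
    gluewL i k a (.comp p q y1 y2) = .comp p q (gluewL i p a y1) (gluewL i q a y2) := by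
  rw [gluewL_comp, if_neg h]

lemma gluewL_low {m k : ℕ} {y : PTree X} (h : LowRoot m y) (a : PTree X) :
    gluewL m k a y = .comp m k a y := by
  cases y with
  | comp p q y1 y2 => rw [gluewL_comp, if_pos (LowRoot_comp.1 h)]
  | leaf c => rfl
  | unit n t => rfl

@[simp] lemma gluewR_leaf (k i : ℕ) (c : X) (a : PTree X) :
    gluewR k i (.leaf c) a = .comp k i (.leaf c) a := rfl
@[simp] lemma gluewR_unit (k i n : ℕ) (t a : PTree X) :
    gluewR k i (.unit n t) a = .comp k i (.unit n t) a := rfl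
lemma gluewR_comp (k i p q : ℕ) (x1 x2 a : PTree X) :
    gluewR k i (.comp p q x1 x2) a =
      if i < min p q then .comp p q (gluewR p i x1 a) (gluewR q i x2 a)
      else if p = i ∧ i < q then .comp p q x1 (gluewR q i x2 a)
      else .comp k i (.comp p q x1 x2) a := rfl

lemma gluewR_dist {i p q : ℕ} (h : i < min p q) (k : ℕ) (x1 x2 a : PTree X) :
    gluewR k i (.comp p q x1 x2) a = .comp p q (gluewR p i x1 a) (gluewR q i x2 a) := by
  rw [gluewR_comp, if_pos h]

lemma gluewR_push {i q : ℕ} (h : i < q) (k : ℕ) (x1 x2 a : PTree X) :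
    gluewR k i (.comp i q x1 x2) a = .comp i q x1 (gluewR q i x2 a) := by
  rw [gluewR_comp, if_neg (by omega), if_pos ⟨rfl, h⟩]

lemma gluewR_base {k i p q : ℕ} (h1 : ¬ i < min p q) (h2 : ¬(p = i ∧ i < q))
    (x1 x2 a : PTree X) :
    gluewR k i (.comp p q x1 x2) a = .comp k i (.comp p q x1 x2) a := by
  rw [gluewR_comp, if_neg h1, if_neg h2]

lemma lowRoot_gluewL {i j k : ℕ} (hij : i ≤ j) (hik : i ≤ k) (a : PTree X) {y : PTree X}
    (hy : LowRoot j y) : LowRoot j (gluewL i k a y) := by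
  cases y with
  | comp p q y1 y2 =>
      rw [gluewL_comp]
      split
      · simp; omega
      · simpa using hy
  | leaf c => simp; omega
  | unit n t => simp; omega

lemma lowRoot_gluewR {i j k : ℕ} (hij : i ≤ j) {x : PTree X} (hx : LowRoot j x)
    (a : PTree X) : LowRoot j (gluewR k i x a) := by
  cases x with
  | comp p q x1 x2 =>
      rw [gluewR_comp]
      split
      · simpa using hx
      · split
        · simpa using hx
        · simp; omega
  | leaf c => simp; omega
  | unit n t => simp; omega

lemma notII_gluewL {i m k : ℕ} (him : i ≠ m) (a : PTree X) {y : PTree X}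
    (hy : NotII m y) : NotII m (gluewL i k a y) := by
  cases y with
  | comp p q y1 y2 =>
      rw [gluewL_comp]
      split
      · simp; intro h _; exact him h
      · simpa using hy
  | leaf c => simp; intro h _; exact him h
  | unit n t => simp; intro h _; exact him h

lemma notII_gluewR {i m k : ℕ} (him : i ≠ m) {x : PTree X} (hx : NotII m x)
    (a : PTree X) : NotII m (gluewR k i x a) := by
  cases x with
  | comp p q x1 x2 =>
      rw [gluewR_comp]
      split
      · simpa using hx
      · split
        · simpa using hx
        · simp; intro _ h; exact him h
  | leaf c => simp; intro _ h; exact him h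
  | unit n t => simp; intro _ h; exact him h

lemma chainD_comp (i p q : ℕ) (a r : PTree X) :
    chainD i (.comp p q a r) =
      if p = i ∧ q = i then a :: chainD i r else [.comp p q a r] := rfl

lemma chainD_cons (i : ℕ) (a r : PTree X) :
    chainD i (.comp i i a r) = a :: chainD i r := by
  rw [chainD_comp, if_pos ⟨rfl, rfl⟩]

lemma chainD_single {i : ℕ} {t : PTree X} (h : NotII i t) : chainD i t = [t] := by
  cases t with
  | comp p q a r => rw [chainD_comp, if_neg (NotII_comp.1 h)]
  | leaf c => rfl
  | unit n t => rfl

lemma glue_eq_def (i : ℕ) (x y : PTree X) :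
    glue i i x y = (chainD i x).foldr (fun a r => .comp i i a r) y := by
  simp [glue]

lemma glue_lt_def {i j : ℕ} (h : i < j) (x y : PTree X) :
    glue i j x y = (chainD i x).foldr (fun a r => gluewL i j a r) y := by
  rw [glue, if_neg (by omega), if_pos h]

lemma glue_gt_def {i j : ℕ} (h : j < i) (x y : PTree X) :
    glue i j x y = (chainD j y).foldl (fun r a => gluewR i j r a) x := by
  rw [glue, if_neg (by omega), if_neg (by omega)]

lemma glue_eq_cons (i : ℕ) (a r y : PTree X) :
    glue i i (.comp i i a r) y = .comp i i a (glue i i r y) := by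
  rw [glue_eq_def, glue_eq_def, chainD_cons, List.foldr_cons]

lemma glue_eq_atom {i : ℕ} {x : PTree X} (h : NotII i x) (y : PTree X) :
    glue i i x y = .comp i i x y := by
  rw [glue_eq_def, chainD_single h, List.foldr_cons, List.foldr_nil]

lemma glue_lt_cons {i j : ℕ} (h : i < j) (a r y : PTree X) :
    glue i j (.comp i i a r) y = gluewL i j a (glue i j r y) := by
  rw [glue_lt_def h, glue_lt_def h, chainD_cons, List.foldr_cons]

lemma glue_lt_atom {i j : ℕ} (h : i < j) {x : PTree X} (hx : NotII i x) (y : PTree X) :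
    glue i j x y = gluewL i j x y := by
  rw [glue_lt_def h, chainD_single hx, List.foldr_cons, List.foldr_nil]

lemma glue_gt_cons {i j : ℕ} (h : j < i) (x a r : PTree X) :
    glue i j x (.comp j j a r) = glue i j (gluewR i j x a) r := by
  rw [glue_gt_def h, glue_gt_def h, chainD_cons, List.foldl_cons]

lemma glue_gt_atom {i j : ℕ} (h : j < i) (x : PTree X) {y : PTree X} (hy : NotII j y) :
    glue i j x y = gluewR i j x y := by
  rw [glue_gt_def h, chainD_single hy, List.foldl_cons, List.foldl_nil]

lemma chainD_foldr (i : ℕ) (L : List (PTree X)) (y : PTree X) :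
    chainD i (L.foldr (fun a r => PTree.comp i i a r) y) = L ++ chainD i y := by
  induction L with
  | nil => rfl
  | cons a L ih => rw [List.foldr_cons, chainD_cons, ih, List.cons_append]

lemma chainD_glue_eq (i : ℕ) (x y : PTree X) :
    chainD i (glue i i x y) = chainD i x ++ chainD i y := by
  rw [glue_eq_def, chainD_foldr]

/-! ### The interchange-type lemmas for `gluewL`/`gluewR` -/

lemma E_ikk {i k : ℕ} (h : i < k) (a Z : PTree X) :
    ∀ Y : PTree X, gluewL i k a (glue k k Y Z) = glue k k (gluewL i k a Y) (gluewL i k a Z) := by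
  intro Y
  induction Y with
  | comp p q Y1 Y2 ih1 ih2 =>
      by_cases hpq : p = k ∧ q = k
      · obtain ⟨rfl, rfl⟩ := hpq
        rw [glue_eq_cons, gluewL_dist (by omega), gluewL_dist (by omega), ih2, glue_eq_cons]
      · rw [glue_eq_atom (NotII_comp.2 hpq), gluewL_dist (by omega),
          glue_eq_atom (notII_gluewL (by omega) a (NotII_comp.2 hpq))]
  | leaf c =>
      rw [glue_eq_atom NotII_leaf, gluewL_dist (by omega),
        glue_eq_atom (notII_gluewL (by omega) a NotII_leaf)]
  | unit n t iht =>
      rw [glue_eq_atom NotII_unit, gluewL_dist (by omega),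
        glue_eq_atom (notII_gluewL (by omega) a NotII_unit)]

lemma E_kki {i k : ℕ} (h : i < k) (a Y : PTree X) :
    ∀ Xt : PTree X, gluewR k i (glue k k Xt Y) a = glue k k (gluewR k i Xt a) (gluewR k i Y a) := by
  intro Xt
  induction Xt with
  | comp p q X1 X2 ih1 ih2 =>
      by_cases hpq : p = k ∧ q = k
      · obtain ⟨rfl, rfl⟩ := hpq
        rw [glue_eq_cons, gluewR_dist (by omega), gluewR_dist (by omega), ih2, glue_eq_cons]
      · rw [glue_eq_atom (NotII_comp.2 hpq), gluewR_dist (by omega),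
          glue_eq_atom (notII_gluewR (by omega) (NotII_comp.2 hpq) a)]
  | leaf c =>
      rw [glue_eq_atom NotII_leaf, gluewR_dist (by omega),
        glue_eq_atom (notII_gluewR (by omega) NotII_leaf a)]
  | unit n t iht =>
      rw [glue_eq_atom NotII_unit, gluewR_dist (by omega),
        glue_eq_atom (notII_gluewR (by omega) NotII_unit a)]

lemma K_iki (i : ℕ) :
    ∀ (Y : PTree X) (k : ℕ), i < k → ∀ a b : PTree X,
      gluewR k i (gluewL i k a Y) b = gluewL i k a (gluewR k i Y b) := by
  intro Y
  induction Y with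
  | comp p q Y1 Y2 ih1 ih2 =>
      intro k hk a b
      by_cases hle : min p q ≤ i
      · rw [gluewL_low (LowRoot_comp.2 hle) a, gluewR_push hk]
        by_cases hpush : p = i ∧ i < q
        · obtain ⟨rfl, hq⟩ := hpush
          rw [gluewR_push hq, gluewL_low (LowRoot_comp.2 (by omega)) a]
        · rw [gluewR_base (by omega) hpush, gluewL_low (LowRoot_comp.2 (by omega)) a]
      · rw [gluewL_dist hle, gluewR_dist (by omega), gluewR_dist (by omega),
          ih1 p (by omega), ih2 q (by omega), gluewL_dist hle]
  | leaf c =>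
      intro k hk a b
      rw [gluewL_leaf, gluewR_push hk, gluewR_leaf,
        gluewL_low (LowRoot_comp.2 (by omega)) a]
  | unit n t iht =>
      intro k hk a b
      rw [gluewL_unit, gluewR_push hk, gluewR_unit,
        gluewL_low (LowRoot_comp.2 (by omega)) a]

lemma Lijk {i j : ℕ} (hij : i < j) (a b : PTree X) :
    ∀ (W : PTree X) (k : ℕ), j ≤ k →
      gluewL i k a (gluewL j k b W) = gluewL j k (gluewL i j a b) (gluewL i k a W) := by
  intro W
  induction W with
  | comp p q W1 W2 ih1 ih2 =>
      intro k hjk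
      by_cases h1 : min p q ≤ j
      · rw [gluewL_low (LowRoot_comp.2 h1) b, gluewL_dist (by omega),
          gluewL_low (lowRoot_gluewL (by omega) (by omega) a (LowRoot_comp.2 h1)) (gluewL i j a b)]
      · rw [gluewL_dist h1, gluewL_dist (by omega), ih1 p (by omega), ih2 q (by omega),
          gluewL_dist (by omega), gluewL_dist h1]
  | leaf c =>
      intro k hjk
      rw [gluewL_leaf, gluewL_dist (by omega), gluewL_leaf,
        gluewL_low (LowRoot_comp.2 (by omega)) (gluewL i j a b)]
  | unit n t iht =>
      intro k hjk
      rw [gluewL_unit, gluewL_dist (by omega), gluewL_unit,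
        gluewL_low (LowRoot_comp.2 (by omega)) (gluewL i j a b)]

lemma Likj {i j : ℕ} (hij : i < j) (a b : PTree X) :
    ∀ (Y : PTree X) (k : ℕ), j ≤ k →
      gluewL i k a (gluewR k j Y b) = gluewR k j (gluewL i k a Y) (gluewL i j a b) := by
  intro Y
  induction Y with
  | comp p q Y1 Y2 ih1 ih2 =>
      intro k hjk
      by_cases h1 : j < min p q
      · rw [gluewR_dist h1, gluewL_dist (by omega), ih1 p (by omega), ih2 q (by omega),
          gluewL_dist (by omega), gluewR_dist h1]
      · by_cases h2 : p = j ∧ j < q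
        · obtain ⟨rfl, hq⟩ := h2
          rw [gluewR_push hq, gluewL_dist (by omega), gluewL_dist (by omega),
            ih2 q (by omega), gluewR_push hq]
        · rw [gluewR_base h1 h2, gluewL_dist (by omega)]
          by_cases h4 : min p q ≤ i
          · rw [gluewL_low (LowRoot_comp.2 h4) a, gluewR_base (by omega) (by omega)]
          · rw [gluewL_dist h4, gluewR_base (by omega) h2]
  | leaf c =>
      intro k hjk
      rw [gluewR_leaf, gluewL_dist (by omega), gluewL_leaf,
        gluewR_base (by omega) (by omega)]
  | unit n t iht =>
      intro k hjk
      rw [gluewR_unit, gluewL_dist (by omega), gluewL_unit,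
        gluewR_base (by omega) (by omega)]

lemma Ljki {i j : ℕ} (hij : i < j) (a b : PTree X) :
    ∀ (Y : PTree X) (k : ℕ), j ≤ k →
      gluewR k i (gluewL j k b Y) a = gluewL j k (gluewR j i b a) (gluewR k i Y a) := by
  intro Y
  induction Y with
  | comp p q Y1 Y2 ih1 ih2 =>
      intro k hjk
      by_cases h1 : min p q ≤ j
      · rw [gluewL_low (LowRoot_comp.2 h1) b, gluewR_dist (by omega),
          gluewL_low (lowRoot_gluewR (by omega) (LowRoot_comp.2 h1) a) (gluewR j i b a)]
      · rw [gluewL_dist h1, gluewR_dist (by omega), ih1 p (by omega), ih2 q (by omega),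
          gluewR_dist (by omega), gluewL_dist h1]
  | leaf c =>
      intro k hjk
      rw [gluewL_leaf, gluewR_dist (by omega), gluewR_leaf,
        gluewL_low (LowRoot_comp.2 (by omega)) (gluewR j i b a)]
  | unit n t iht =>
      intro k hjk
      rw [gluewL_unit, gluewR_dist (by omega), gluewR_unit,
        gluewL_low (LowRoot_comp.2 (by omega)) (gluewR j i b a)]

lemma Lkji {i j : ℕ} (hij : i < j) (a b : PTree X) :
    ∀ (Xt : PTree X) (k : ℕ), j ≤ k →
      gluewR k i (gluewR k j Xt b) a = gluewR k j (gluewR k i Xt a) (gluewR j i b a) := by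
  intro Xt
  induction Xt with
  | comp p q X1 X2 ih1 ih2 =>
      intro k hjk
      by_cases h1 : j < min p q
      · rw [gluewR_dist h1, gluewR_dist (by omega), ih1 p (by omega), ih2 q (by omega),
          gluewR_dist (by omega), gluewR_dist h1]
      · by_cases h2 : p = j ∧ j < q
        · obtain ⟨rfl, hq⟩ := h2
          rw [gluewR_push hq, gluewR_dist (by omega), gluewR_dist (by omega),
            ih2 q (by omega), gluewR_push hq]
        · rw [gluewR_base h1 h2, gluewR_dist (by omega)]
          by_cases h3 : i < min p q
          · rw [gluewR_dist h3, gluewR_base (by omega) (by omega)]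
          · by_cases h4 : p = i ∧ i < q
            · obtain ⟨rfl, hq⟩ := h4
              rw [gluewR_push hq, gluewR_base (by omega) (by omega)]
            · rw [gluewR_base h3 h4, gluewR_base (by omega) (by omega)]
  | leaf c =>
      intro k hjk
      rw [gluewR_leaf, gluewR_dist (by omega), gluewR_leaf,
        gluewR_base (by omega) (by omega)]
  | unit n t iht =>
      intro k hjk
      rw [gluewR_unit, gluewR_dist (by omega), gluewR_unit,
        gluewR_base (by omega) (by omega)]

/-! ### Second-level lemmas: atoms against glued chains -/

lemma Cijk {i j k : ℕ} (hij : i < j) (hjk : j < k) (a Z : PTree X) :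
    ∀ Y : PTree X, gluewL i k a (glue j k Y Z) = glue j k (gluewL i j a Y) (gluewL i k a Z) := by
  intro Y
  induction Y with
  | comp p q Y1 Y2 ih1 ih2 =>
      by_cases hpq : p = j ∧ q = j
      · obtain ⟨rfl, rfl⟩ := hpq
        rw [glue_lt_cons hjk, Lijk hij a Y1 (glue q k Y2 Z) k hjk.le, ih2,
          gluewL_dist (by omega), glue_lt_cons hjk]
      · rw [glue_lt_atom hjk (NotII_comp.2 hpq), Lijk hij a _ Z k hjk.le,
          glue_lt_atom hjk (notII_gluewL (by omega) a (NotII_comp.2 hpq))]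
  | leaf c =>
      rw [glue_lt_atom hjk NotII_leaf, Lijk hij a _ Z k hjk.le,
        glue_lt_atom hjk (notII_gluewL (by omega) a NotII_leaf)]
  | unit n t iht =>
      rw [glue_lt_atom hjk NotII_unit, Lijk hij a _ Z k hjk.le,
        glue_lt_atom hjk (notII_gluewL (by omega) a NotII_unit)]

lemma Cikj {i j k : ℕ} (hij : i < j) (hjk : j < k) (a : PTree X) :
    ∀ Z Y : PTree X, gluewL i k a (glue k j Y Z) = glue k j (gluewL i k a Y) (gluewL i j a Z) := by
  intro Z
  induction Z with
  | comp p q Z1 Z2 ih1 ih2 =>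
      intro Y
      by_cases hpq : p = j ∧ q = j
      · obtain ⟨rfl, rfl⟩ := hpq
        rw [glue_gt_cons hjk, ih2, Likj hij a Z1 Y k hjk.le,
          gluewL_dist (by omega), glue_gt_cons hjk]
      · rw [glue_gt_atom hjk Y (NotII_comp.2 hpq), Likj hij a _ Y k hjk.le,
          glue_gt_atom hjk _ (notII_gluewL (by omega) a (NotII_comp.2 hpq))]
  | leaf c =>
      intro Y
      rw [glue_gt_atom hjk Y NotII_leaf, Likj hij a _ Y k hjk.le,
        glue_gt_atom hjk _ (notII_gluewL (by omega) a NotII_leaf)]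
  | unit n t iht =>
      intro Y
      rw [glue_gt_atom hjk Y NotII_unit, Likj hij a _ Y k hjk.le,
        glue_gt_atom hjk _ (notII_gluewL (by omega) a NotII_unit)]

lemma Cjki {i j k : ℕ} (hij : i < j) (hjk : j < k) (a Y : PTree X) :
    ∀ Xt : PTree X, gluewR k i (glue j k Xt Y) a = glue j k (gluewR j i Xt a) (gluewR k i Y a) := by
  intro Xt
  induction Xt with
  | comp p q X1 X2 ih1 ih2 =>
      by_cases hpq : p = j ∧ q = j
      · obtain ⟨rfl, rfl⟩ := hpq
        rw [glue_lt_cons hjk, Ljki hij a X1 (glue q k X2 Y) k hjk.le, ih2,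
          gluewR_dist (by omega), glue_lt_cons hjk]
      · rw [glue_lt_atom hjk (NotII_comp.2 hpq), Ljki hij a _ Y k hjk.le,
          glue_lt_atom hjk (notII_gluewR (by omega) (NotII_comp.2 hpq) a)]
  | leaf c =>
      rw [glue_lt_atom hjk NotII_leaf, Ljki hij a _ Y k hjk.le,
        glue_lt_atom hjk (notII_gluewR (by omega) NotII_leaf a)]
  | unit n t iht =>
      rw [glue_lt_atom hjk NotII_unit, Ljki hij a _ Y k hjk.le,
        glue_lt_atom hjk (notII_gluewR (by omega) NotII_unit a)]

lemma Ckji {i j k : ℕ} (hij : i < j) (hjk : j < k) (a : PTree X) :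
    ∀ Y Xt : PTree X, gluewR k i (glue k j Xt Y) a = glue k j (gluewR k i Xt a) (gluewR j i Y a) := by
  intro Y
  induction Y with
  | comp p q Y1 Y2 ih1 ih2 =>
      intro Xt
      by_cases hpq : p = j ∧ q = j
      · obtain ⟨rfl, rfl⟩ := hpq
        rw [glue_gt_cons hjk, ih2, Lkji hij a Y1 Xt k hjk.le,
          gluewR_dist (by omega), glue_gt_cons hjk]
      · rw [glue_gt_atom hjk Xt (NotII_comp.2 hpq), Lkji hij a _ Xt k hjk.le,
          glue_gt_atom hjk _ (notII_gluewR (by omega) (NotII_comp.2 hpq) a)]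
  | leaf c =>
      intro Xt
      rw [glue_gt_atom hjk Xt NotII_leaf, Lkji hij a _ Xt k hjk.le,
        glue_gt_atom hjk _ (notII_gluewR (by omega) NotII_leaf a)]
  | unit n t iht =>
      intro Xt
      rw [glue_gt_atom hjk Xt NotII_unit, Lkji hij a _ Xt k hjk.le,
        glue_gt_atom hjk _ (notII_gluewR (by omega) NotII_unit a)]

/-! ### Lifting to chains, and the ten associativity identities for `glue` -/

lemma foldr_E {i k : ℕ} (h : i < k) (L : List (PTree X)) (Y Z : PTree X) :
    L.foldr (fun a r => gluewL i k a r) (glue k k Y Z)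
      = glue k k (L.foldr (fun a r => gluewL i k a r) Y) (L.foldr (fun a r => gluewL i k a r) Z) := by
  induction L with
  | nil => rfl
  | cons a L ih => simp only [List.foldr_cons]; rw [ih, E_ikk h]

lemma foldl_E {i k : ℕ} (h : i < k) (L : List (PTree X)) :
    ∀ Xt Y : PTree X, L.foldl (fun r a => gluewR k i r a) (glue k k Xt Y)
      = glue k k (L.foldl (fun r a => gluewR k i r a) Xt) (L.foldl (fun r a => gluewR k i r a) Y) := by
  induction L with
  | nil => intro Xt Y; rfl
  | cons a L ih =>
      intro Xt Y
      simp only [List.foldl_cons]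
      rw [E_kki h a Y Xt, ih]

lemma foldr_K {i k : ℕ} (h : i < k) (L : List (PTree X)) (Y b : PTree X) :
    gluewR k i (L.foldr (fun a r => gluewL i k a r) Y) b
      = L.foldr (fun a r => gluewL i k a r) (gluewR k i Y b) := by
  induction L with
  | nil => rfl
  | cons a L ih => simp only [List.foldr_cons]; rw [K_iki i _ k h, ih]

lemma aux_iki {i k : ℕ} (h : i < k) (L1 : List (PTree X)) :
    ∀ (L2 : List (PTree X)) (Y : PTree X),
      L2.foldl (fun r a => gluewR k i r a) (L1.foldr (fun a r => gluewL i k a r) Y)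
        = L1.foldr (fun a r => gluewL i k a r) (L2.foldl (fun r a => gluewR k i r a) Y) := by
  intro L2
  induction L2 with
  | nil => intro Y; rfl
  | cons b L2 ih =>
      intro Y
      simp only [List.foldl_cons]
      rw [foldr_K h L1 Y b, ih]

lemma foldr_Cijk {i j k : ℕ} (hij : i < j) (hjk : j < k) (L : List (PTree X)) (Y Z : PTree X) :
    L.foldr (fun a r => gluewL i k a r) (glue j k Y Z)
      = glue j k (L.foldr (fun a r => gluewL i j a r) Y) (L.foldr (fun a r => gluewL i k a r) Z) := by
  induction L with
  | nil => rfl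
  | cons a L ih => simp only [List.foldr_cons]; rw [ih, Cijk hij hjk]

lemma foldr_Cikj {i j k : ℕ} (hij : i < j) (hjk : j < k) (L : List (PTree X)) (Y Z : PTree X) :
    L.foldr (fun a r => gluewL i k a r) (glue k j Y Z)
      = glue k j (L.foldr (fun a r => gluewL i k a r) Y) (L.foldr (fun a r => gluewL i j a r) Z) := by
  induction L with
  | nil => rfl
  | cons a L ih => simp only [List.foldr_cons]; rw [ih, Cikj hij hjk]

lemma foldl_Cjki {i j k : ℕ} (hij : i < j) (hjk : j < k) (L : List (PTree X)) :
    ∀ Xt Y : PTree X, L.foldl (fun r a => gluewR k i r a) (glue j k Xt Y)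
      = glue j k (L.foldl (fun r a => gluewR j i r a) Xt) (L.foldl (fun r a => gluewR k i r a) Y) := by
  induction L with
  | nil => intro Xt Y; rfl
  | cons a L ih =>
      intro Xt Y
      simp only [List.foldl_cons]
      rw [Cjki hij hjk a Y Xt, ih]

lemma foldl_Ckji {i j k : ℕ} (hij : i < j) (hjk : j < k) (L : List (PTree X)) :
    ∀ Xt Y : PTree X, L.foldl (fun r a => gluewR k i r a) (glue k j Xt Y)
      = glue k j (L.foldl (fun r a => gluewR k i r a) Xt) (L.foldl (fun r a => gluewR j i r a) Y) := by
  induction L with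
  | nil => intro Xt Y; rfl
  | cons a L ih =>
      intro Xt Y
      simp only [List.foldl_cons]
      rw [Ckji hij hjk a Y Xt, ih]

lemma A_kkk (k : ℕ) (Xt Y Z : PTree X) :
    glue k k (glue k k Xt Y) Z = glue k k Xt (glue k k Y Z) := by
  rw [glue_eq_def k (glue k k Xt Y) Z, chainD_glue_eq, glue_eq_def k Xt (glue k k Y Z),
    glue_eq_def k Y Z, List.foldr_append]

lemma A_iik {i k : ℕ} (h : i < k) (Xt Y Z : PTree X) :
    glue i k (glue i i Xt Y) Z = glue i k Xt (glue i k Y Z) := by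
  rw [glue_lt_def h (glue i i Xt Y) Z, chainD_glue_eq, glue_lt_def h Xt (glue i k Y Z),
    glue_lt_def h Y Z, List.foldr_append]

lemma A_kii {i k : ℕ} (h : i < k) (Xt Y Z : PTree X) :
    glue k i (glue k i Xt Y) Z = glue k i Xt (glue i i Y Z) := by
  rw [glue_gt_def h (glue k i Xt Y) Z, glue_gt_def h Xt (glue i i Y Z), chainD_glue_eq,
    glue_gt_def h Xt Y, List.foldl_append]

lemma A_ikk {i k : ℕ} (h : i < k) (Xt Y Z : PTree X) :
    glue i k Xt (glue k k Y Z) = glue k k (glue i k Xt Y) (glue i k Xt Z) := by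
  rw [glue_lt_def h Xt (glue k k Y Z), glue_lt_def h Xt Y, glue_lt_def h Xt Z, foldr_E h]

lemma A_kki {i k : ℕ} (h : i < k) (Xt Y Z : PTree X) :
    glue k i (glue k k Xt Y) Z = glue k k (glue k i Xt Z) (glue k i Y Z) := by
  rw [glue_gt_def h (glue k k Xt Y) Z, glue_gt_def h Xt Z, glue_gt_def h Y Z, foldl_E h]

lemma A_iki {i k : ℕ} (h : i < k) (Xt Y Z : PTree X) :
    glue k i (glue i k Xt Y) Z = glue i k Xt (glue k i Y Z) := by
  rw [glue_gt_def h (glue i k Xt Y) Z, glue_lt_def h Xt Y, glue_lt_def h Xt (glue k i Y Z),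
    glue_gt_def h Y Z, aux_iki h]

lemma A_ijk {i j k : ℕ} (hij : i < j) (hjk : j < k) (Xt Y Z : PTree X) :
    glue i k Xt (glue j k Y Z) = glue j k (glue i j Xt Y) (glue i k Xt Z) := by
  rw [glue_lt_def (hij.trans hjk) Xt (glue j k Y Z), glue_lt_def hij Xt Y,
    glue_lt_def (hij.trans hjk) Xt Z, foldr_Cijk hij hjk]

lemma A_ikj {i j k : ℕ} (hij : i < j) (hjk : j < k) (Xt Y Z : PTree X) :
    glue i k Xt (glue k j Y Z) = glue k j (glue i k Xt Y) (glue i j Xt Z) := by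
  rw [glue_lt_def (hij.trans hjk) Xt (glue k j Y Z), glue_lt_def (hij.trans hjk) Xt Y,
    glue_lt_def hij Xt Z, foldr_Cikj hij hjk]

lemma A_jki {i j k : ℕ} (hij : i < j) (hjk : j < k) (Xt Y Z : PTree X) :
    glue k i (glue j k Xt Y) Z = glue j k (glue j i Xt Z) (glue k i Y Z) := by
  rw [glue_gt_def (hij.trans hjk) (glue j k Xt Y) Z, glue_gt_def hij Xt Z,
    glue_gt_def (hij.trans hjk) Y Z, foldl_Cjki hij hjk]

lemma A_kji {i j k : ℕ} (hij : i < j) (hjk : j < k) (Xt Y Z : PTree X) :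
    glue k i (glue k j Xt Y) Z = glue k j (glue k i Xt Z) (glue j i Y Z) := by
  rw [glue_gt_def (hij.trans hjk) (glue k j Xt Y) Z, glue_gt_def (hij.trans hjk) Xt Z,
    glue_gt_def hij Y Z, foldl_Ckji hij hjk]

/-! ### `≗°` preserves the normalization -/

lemma nf_comp {P : Precomputad} (i j : ℕ) (x y : PTree P.cells) :
    nf (.comp i j x y) = glue i j (nf x) (nf y) := rfl

theorem relO_nf {P : Precomputad} {x y : PTree P.cells} (h : RelO P x y) :
    nf x = nf y := by
  refine RelO.rec (P := P) (motive_1 := fun t _ => True) (motive_2 := fun a b _ => nf a = nf b)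
    ?_ ?_ ?_ ?_ ?_ ?_ ?_ ?_ ?_ ?_ ?_ ?_ ?_ ?_ ?_ ?_ ?_ h
  · intros; trivial
  · intros; trivial
  · intros; trivial
  · intros; rfl
  · intro _ _ _ ih; exact ih.symm
  · intro _ _ _ _ _ ih1 ih2; exact ih1.trans ih2
  · intro i j x1 x2 y1 y2 _ _ _ _ ih1 ih2 _ _
    simp only [nf_comp, ih1, ih2]
  · intro k x1 y1 z1; intros; simp only [nf_comp]; exact A_kkk _ _ _ _
  · intro i k x1 y1 z1 hik; intros; simp only [nf_comp]; exact A_iik hik _ _ _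
  · intro i k x1 y1 z1 hik; intros; simp only [nf_comp]; exact A_iki hik _ _ _
  · intro i k x1 y1 z1 hik; intros; simp only [nf_comp]; exact A_kii hik _ _ _
  · intro i k x1 y1 z1 hik; intros; simp only [nf_comp]; exact A_ikk hik _ _ _
  · intro i k x1 y1 z1 hik; intros; simp only [nf_comp]; exact A_kki hik _ _ _
  · intro i j k x1 y1 z1 hij hjk; intros; simp only [nf_comp]; exact A_ijk hij hjk _ _ _
  · intro i j k x1 y1 z1 hij hjk; intros; simp only [nf_comp]; exact A_ikj hij hjk _ _ _
  · intro i j k x1 y1 z1 hij hjk; intros; simp only [nf_comp]; exact A_jki hij hjk _ _ _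
  · intro i j k x1 y1 z1 hij hjk; intros; simp only [nf_comp]; exact A_kji hij hjk _ _ _

/-! ### Normal forms are fixed by `nf` -/

lemma chainB_NF {i k : ℕ} {t : PTree X} (hik : i < k) (hB : ChainB i k t) : NF t := by
  cases hB with
  | cons _ _ x y hB hN hnu hsm => exact NF.compGt i k x y hik hB hN hnu hsm
  | base _ _ _ hN _ _ => exact hN

lemma chainA_NF {i k : ℕ} {t : PTree X} (hik : i < k) (hA : ChainA i k t) : NF t := by
  cases hA with
  | cons _ _ x y hN hnu hsm hA => exact NF.compLt i k x y hik hN hnu hsm hA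
  | toB _ _ _ hB => exact chainB_NF hik hB

lemma chainKK_NF {k : ℕ} {t : PTree X} (hK : ChainKK k t) : NF t := by
  cases hK with
  | cons _ x y hN hnu hsm hK => exact NF.compEq k x y hN hnu hsm hK
  | base _ _ hN _ _ => exact hN

lemma notII_of_small {m : ℕ} {t : PTree X} (hs : smallRoot m t) : NotII m t := by
  cases t with
  | comp a b u v =>
      rintro ⟨rfl, rfl⟩
      have := hs _ _ _ _ rfl
      omega
  | leaf c => trivial
  | unit n t => trivial

lemma lowRoot_of_small {m : ℕ} {t : PTree X} (hs : smallRoot m t) : LowRoot m t := by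
  cases t with
  | comp a b u v => exact LowRoot_comp.2 (le_of_lt (hs _ _ _ _ rfl))
  | leaf c => trivial
  | unit n t => trivial

lemma chainA_low {i k : ℕ} {y : PTree X} (hik : i < k) (hA : ChainA i k y) : LowRoot i y := by
  cases hA with
  | cons _ _ x y _ _ _ _ => exact LowRoot_comp.2 (by omega)
  | toB _ _ _ hB =>
      cases hB with
      | cons _ _ x y _ _ _ _ => exact LowRoot_comp.2 (by omega)
      | base _ _ _ _ _ hsm => exact lowRoot_of_small hsm

lemma gluewR_chainB {i k : ℕ} (hik : i < k) {x : PTree X} (hB : ChainB i k x) (a : PTree X) :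
    gluewR k i x a = .comp k i x a := by
  cases hB with
  | cons _ _ x y hB hN hnu hsm =>
      exact gluewR_base (by omega) (by rintro ⟨rfl, -⟩; omega) _ _ _
  | base _ _ _ hN hnu hsm =>
      cases x with
      | comp p q u v =>
          have := hsm _ _ _ _ rfl
          exact gluewR_base (by omega) (by rintro ⟨rfl, hq⟩; omega) _ _ _
      | leaf c => rfl
      | unit n t => rfl

theorem nf_of_NF : ∀ t : PTree X, NF t → nf t = t := by
  intro t
  induction t with
  | leaf c => intro _; rfl
  | unit n t ih =>
      intro h
      cases h with
      | unit _ _ hN => show PTree.unit n (nf t) = PTree.unit n t; rw [ih hN]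
  | comp i j x y ihx ihy =>
      intro h
      cases h with
      | compEq _ _ _ hNx hnu hsm hK =>
          show glue i i (nf x) (nf y) = PTree.comp i i x y
          rw [ihx hNx, ihy (chainKK_NF hK), glue_eq_atom (notII_of_small hsm)]
      | compLt _ _ _ _ hik hNx hnu hsm hA =>
          show glue i j (nf x) (nf y) = PTree.comp i j x y
          rw [ihx hNx, ihy (chainA_NF hik hA), glue_lt_atom hik (notII_of_small hsm),
            gluewL_low (chainA_low hik hA)]
      | compGt _ _ _ _ hik hB hNy hnu hsm =>
          show glue i j (nf x) (nf y) = PTree.comp i j x y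
          rw [ihx (chainB_NF hik hB), ihy hNy, glue_gt_atom hik _ (notII_of_small hsm),
            gluewR_chainB hik hB]

end NFU


/-- Uniqueness of normal forms for unit-free trees: `≗°`-equivalent
unit-free trees in normal form are equal. -/
theorem normalForm_unique_unitFree {n : ℕ} (C : Computad n) (x x' : PTree C.cells)
    (hux : PTree.UnitFree x) (hux' : PTree.UnitFree x')
    (hx : CompatO C.toPrecomputad x) (hx' : CompatO C.toPrecomputad x')
    (hnx : NF x) (hnx' : NF x') (h : RelO C.toPrecomputad x x') :
    x = x' := by
  rw [← NFU.nf_of_NF x hnx, ← NFU.nf_of_NF x' hnx', NFU.relO_nf h]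

end Sesq
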